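/- Let L ≥ 1, let B ∈ ℝ^{L×L} satisfy ∑_{l=0}^{L−1} b_{l,m}² = 1 for every m, let α_l ≥ 0 for all l, and let 0 < σ² ≤ σ'². Let sir_m(i) and sir'_m(i) denote the density-evolution sequences with noise variances σ² and σ'² respectively, i.e., sir_m(0) = 0 and, for i ≥ 1, sir_m(i) = ∑_l b_{l,m}²/(σ² + α_l ∑_{m'} b_{l,m'}²·mmse(sir_{m'}(i−1))), and likewise with σ'². Then sir_m(i) ≥ sir'_m(i) for all i and all m. -/

import Mathlib

/-- The minimum mean-squared error of the BPSK-input real AWGN channel with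
signal-to-noise ratio `s`. -/
noncomputable def mmse (s : ℝ) : ℝ :=
  1 - ∫ z : ℝ,
    Real.tanh (s + Real.sqrt s * z) * ((Real.sqrt (2 * Real.pi))⁻¹ * Real.exp (-z ^ 2 / 2))

/-!
The DE map is monotone: a smaller noise variance and larger SIRs (hence smaller MMSEs) both
shrink every denominator, so `sir' i ≤ sir i` propagates by induction on `i`. The analytic input
is that `mmse` is antitone on `[0, ∞)`. Writing `s = u²`, `1 - mmse s = E[tanh(u² + uZ)]` has
`u`-derivative `E[(1 - tanh²)(2u + Z)]`, and Stein's identity `E[Z f(Z)] = E[f'(Z)]` turns this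
into `2u E[(1 - tanh²)(1 - tanh)] ≥ 0`.
-/

open Real MeasureTheory ProbabilityTheory Set
open scoped NNReal

theorem Real.hasDerivAt_tanh (x : ℝ) : HasDerivAt tanh (1 - tanh x ^ 2) x := by
  rw [show tanh = fun y => sinh y / cosh y from funext tanh_eq_sinh_div_cosh]
  refine ((hasDerivAt_sinh x).div (hasDerivAt_cosh x) (cosh_pos x).ne').congr_deriv ?_
  rw [div_pow, one_sub_div (pow_ne_zero 2 (cosh_pos x).ne')]
  ring

@[fun_prop]
theorem Real.continuous_tanh : Continuous tanh :=
  continuous_iff_continuousAt.2 fun x => (hasDerivAt_tanh x).continuousAt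

theorem Real.abs_one_sub_tanh_sq_le_one (x : ℝ) : |1 - tanh x ^ 2| ≤ 1 :=
  abs_le.2 ⟨by linarith [tanh_sq_lt_one x], by linarith [sq_nonneg (tanh x)]⟩

theorem hasDerivAt_gaussianPDFReal (μ : ℝ) (v : ℝ≥0) (x : ℝ) :
    HasDerivAt (gaussianPDFReal μ v) (-((x - μ) / v) * gaussianPDFReal μ v x) x := by
  have hsq : HasDerivAt (fun y => (y - μ) ^ 2) (2 * (x - μ)) x := by
    simpa using ((hasDerivAt_id x).sub_const μ).fun_pow 2
  have hexp := ((hsq.fun_neg.div_const (2 * (v : ℝ))).exp).const_mul (√(2 * π * v))⁻¹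
  rw [gaussianPDFReal_def]
  exact hexp.congr_deriv (by ring)

theorem gaussianPDFReal_zero_one (z : ℝ) :
    gaussianPDFReal 0 1 z = (√(2 * π))⁻¹ * exp (-z ^ 2 / 2) := by
  simp [gaussianPDFReal]

theorem integrable_mul_gaussianPDFReal_of_abs_le {μ : ℝ} {v : ℝ≥0} {f : ℝ → ℝ} {C : ℝ}
    (hf : AEStronglyMeasurable f) (hC : ∀ z, |f z| ≤ C) :
    Integrable (fun z => f z * gaussianPDFReal μ v z) :=
  (integrable_gaussianPDFReal μ v).bdd_mul hf (ae_of_all _ hC)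

theorem integrable_abs_mul_gaussianPDFReal_zero_one :
    Integrable (fun z => |z| * gaussianPDFReal 0 1 z) := by
  refine ((integrable_mul_exp_neg_mul_sq one_half_pos).abs.const_mul (√(2 * π))⁻¹).congr
    (ae_of_all _ fun z => ?_)
  simp only [gaussianPDFReal_zero_one, abs_mul, abs_of_pos (exp_pos _)]
  ring_nf

theorem integrable_mul_mul_gaussianPDFReal_zero_one {f : ℝ → ℝ} {C : ℝ}
    (hf : AEStronglyMeasurable f) (hfC : ∀ z, |f z| ≤ C) :
    Integrable (fun z => z * f z * gaussianPDFReal 0 1 z) := by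
  refine (integrable_abs_mul_gaussianPDFReal_zero_one.const_mul C).mono'
    ((continuous_id.aestronglyMeasurable.mul hf).mul
      (integrable_gaussianPDFReal 0 1).aestronglyMeasurable) (ae_of_all _ fun z => ?_)
  rw [norm_mul, norm_mul, Real.norm_eq_abs, Real.norm_eq_abs, Real.norm_eq_abs,
    abs_of_nonneg (gaussianPDFReal_nonneg 0 1 z)]
  have := mul_le_mul_of_nonneg_left (hfC z) (abs_nonneg z)
  have := gaussianPDFReal_nonneg 0 1 z
  nlinarith

theorem integral_mul_mul_gaussianPDFReal_zero_one {f f' : ℝ → ℝ} {C C' : ℝ}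
    (hf : ∀ z, HasDerivAt f (f' z) z) (hfC : ∀ z, |f z| ≤ C) (hf'C : ∀ z, |f' z| ≤ C') :
    ∫ z, z * f z * gaussianPDFReal 0 1 z = ∫ z, f' z * gaussianPDFReal 0 1 z := by
  have hf_meas : AEStronglyMeasurable f :=
    (continuous_iff_continuousAt.2 fun z => (hf z).continuousAt).aestronglyMeasurable
  have hf'_meas : AEStronglyMeasurable f' := by
    rw [show f' = deriv f from funext fun z => (hf z).deriv.symm]
    exact (measurable_deriv f).aestronglyMeasurable
  have hzf := integrable_mul_mul_gaussianPDFReal_zero_one hf_meas hfC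
  have hparts := integral_mul_deriv_eq_deriv_mul_of_integrable (u := f) (v := gaussianPDFReal 0 1)
    (fun z _ => hf z) (fun z _ => hasDerivAt_gaussianPDFReal 0 1 z) ?_
    (integrable_mul_gaussianPDFReal_of_abs_le hf'_meas hf'C)
    (integrable_mul_gaussianPDFReal_of_abs_le hf_meas hfC)
  · simp only [sub_zero, NNReal.coe_one, div_one, neg_mul, mul_neg, integral_neg, neg_inj]
      at hparts
    simpa only [mul_assoc, mul_left_comm _ (f _)] using hparts
  · refine hzf.neg.congr (ae_of_all _ fun z => ?_)
    simp only [Pi.mul_apply, Pi.neg_apply, sub_zero, NNReal.coe_one, div_one]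
    ring

theorem mmse_eq_integral_gaussianPDFReal (s : ℝ) :
    mmse s = 1 - ∫ z, tanh (s + √s * z) * gaussianPDFReal 0 1 z := by
  simp only [mmse, gaussianPDFReal_zero_one]

theorem mmse_nonneg (s : ℝ) : 0 ≤ mmse s := by
  have hmeas : AEStronglyMeasurable fun z => tanh (s + √s * z) :=
    (by fun_prop : Continuous _).aestronglyMeasurable
  have hle : ∫ z, tanh (s + √s * z) * gaussianPDFReal 0 1 z ≤ ∫ z, gaussianPDFReal 0 1 z :=
    integral_mono (integrable_mul_gaussianPDFReal_of_abs_le hmeas fun z => (abs_tanh_lt_one _).le)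
      (integrable_gaussianPDFReal 0 1) fun z =>
        mul_le_of_le_one_left (gaussianPDFReal_nonneg 0 1 z) (tanh_lt_one _).le
  rw [mmse_eq_integral_gaussianPDFReal, integral_gaussianPDFReal_eq_one 0 one_ne_zero] at *
  linarith

/-- `E[tanh(u² + uZ)]`, parametrised by `u = √s` so that it is differentiable at `0` too. -/
noncomputable def meanTanh (u : ℝ) : ℝ := ∫ z, tanh (u ^ 2 + u * z) * gaussianPDFReal 0 1 z

theorem mmse_eq_one_sub_meanTanh {s : ℝ} (hs : 0 ≤ s) : mmse s = 1 - meanTanh √s := by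
  rw [mmse_eq_integral_gaussianPDFReal, meanTanh, sq_sqrt hs]

theorem hasDerivAt_tanh_sq_add_mul (z u : ℝ) :
    HasDerivAt (fun x => tanh (x ^ 2 + x * z)) ((1 - tanh (u ^ 2 + u * z) ^ 2) * (2 * u + z)) u :=
  (hasDerivAt_tanh _).comp u (((hasDerivAt_pow 2 u).add ((hasDerivAt_id u).mul_const z)).congr_deriv
    (by simp))

theorem hasDerivAt_meanTanh (u : ℝ) :
    HasDerivAt meanTanh
      (∫ z, (1 - tanh (u ^ 2 + u * z) ^ 2) * (2 * u + z) * gaussianPDFReal 0 1 z) u := by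
  have hint : Integrable fun z => (2 * (|u| + 1) + |z|) * gaussianPDFReal 0 1 z := by
    simp only [add_mul]
    exact ((integrable_gaussianPDFReal 0 1).const_mul _).add
      integrable_abs_mul_gaussianPDFReal_zero_one
  refine (hasDerivAt_integral_of_dominated_loc_of_deriv_le (Metric.ball_mem_nhds u one_pos)
    (.of_forall fun x => ?_) ?_ ?_ (ae_of_all _ fun z x hx => ?_) hint
    (ae_of_all _ fun z x _ => (hasDerivAt_tanh_sq_add_mul z x).mul_const _)).2
  · exact (by fun_prop : Continuous _).aestronglyMeasurable.mul
      (integrable_gaussianPDFReal 0 1).aestronglyMeasurable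
  · exact integrable_mul_gaussianPDFReal_of_abs_le
      (by fun_prop : Continuous _).aestronglyMeasurable fun z => (abs_tanh_lt_one _).le
  · exact (by fun_prop : Continuous fun z => (1 - tanh (u ^ 2 + u * z) ^ 2) * (2 * u + z))
      |>.aestronglyMeasurable.mul (integrable_gaussianPDFReal 0 1).aestronglyMeasurable
  · have hx' : |x| ≤ |u| + 1 := by
      have := abs_sub_abs_le_abs_sub x u
      rw [Metric.mem_ball, Real.dist_eq] at hx
      linarith
    have hlin : |2 * x + z| ≤ 2 * (|u| + 1) + |z| := by
      calc |2 * x + z| ≤ |2 * x| + |z| := abs_add_le _ _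
        _ ≤ 2 * (|u| + 1) + |z| := by rw [abs_mul, abs_two]; linarith
    rw [Real.norm_eq_abs, abs_mul, abs_mul, abs_of_nonneg (gaussianPDFReal_nonneg 0 1 z)]
    refine mul_le_mul_of_nonneg_right ?_ (gaussianPDFReal_nonneg 0 1 z)
    simpa using mul_le_mul (abs_one_sub_tanh_sq_le_one _) hlin (abs_nonneg _) zero_le_one

theorem integral_deriv_meanTanh (u : ℝ) :
    ∫ z, (1 - tanh (u ^ 2 + u * z) ^ 2) * (2 * u + z) * gaussianPDFReal 0 1 z =
      2 * u * ∫ z, (1 - tanh (u ^ 2 + u * z) ^ 2) * (1 - tanh (u ^ 2 + u * z)) *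
        gaussianPDFReal 0 1 z := by
  set t : ℝ → ℝ := fun z => tanh (u ^ 2 + u * z)
  set f : ℝ → ℝ := fun z => 1 - t z ^ 2
  set f' : ℝ → ℝ := fun z => -(2 * t z * (f z * u))
  have ht : ∀ z, HasDerivAt t (f z * u) z := fun z =>
    (hasDerivAt_tanh _).comp z (((hasDerivAt_id z).const_mul u).const_add (u ^ 2)
      |>.congr_deriv (mul_one u))
  have hf : ∀ z, HasDerivAt f (f' z) z := fun z =>
    (((ht z).fun_pow 2).const_sub 1).congr_deriv (by simp [f'])
  have hf_bdd : ∀ z, |f z| ≤ 1 := fun z => abs_one_sub_tanh_sq_le_one _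
  have hf'_bdd : ∀ z, |f' z| ≤ 2 * |u| := fun z => by
    have ht_bdd : |t z| ≤ 1 := (abs_tanh_lt_one _).le
    calc |f' z| = 2 * |t z| * (|f z| * |u|) := by simp only [f', abs_neg, abs_mul, abs_two]
      _ ≤ 2 * 1 * (1 * |u|) := by gcongr; exact hf_bdd z
      _ = 2 * |u| := by ring
  have hf_meas : AEStronglyMeasurable f := (by fun_prop : Continuous f).aestronglyMeasurable
  have hf'_meas : AEStronglyMeasurable f' := (by fun_prop : Continuous f').aestronglyMeasurable
  have hI₁ := integrable_mul_gaussianPDFReal_of_abs_le (μ := 0) (v := 1) hf_meas hf_bdd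
  have hI₂ := integrable_mul_mul_gaussianPDFReal_zero_one hf_meas hf_bdd
  have hI₃ := integrable_mul_gaussianPDFReal_of_abs_le (μ := 0) (v := 1) hf'_meas hf'_bdd
  calc ∫ z, f z * (2 * u + z) * gaussianPDFReal 0 1 z
      = ∫ z, (2 * u * (f z * gaussianPDFReal 0 1 z) + z * f z * gaussianPDFReal 0 1 z) := by
        congr 1; ext z; ring
    _ = (2 * u * ∫ z, f z * gaussianPDFReal 0 1 z) + ∫ z, f' z * gaussianPDFReal 0 1 z := by
        rw [integral_add (hI₁.const_mul _) hI₂, integral_const_mul,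
          integral_mul_mul_gaussianPDFReal_zero_one hf hf_bdd hf'_bdd]
    _ = ∫ z, (2 * u * (f z * gaussianPDFReal 0 1 z) + f' z * gaussianPDFReal 0 1 z) := by
        rw [integral_add (hI₁.const_mul _) hI₃, integral_const_mul]
    _ = 2 * u * ∫ z, f z * (1 - t z) * gaussianPDFReal 0 1 z := by
        rw [← integral_const_mul]
        congr 1; ext z; simp only [f']; ring

theorem monotoneOn_meanTanh : MonotoneOn meanTanh (Ici 0) := by
  refine monotoneOn_of_deriv_nonneg (convex_Ici 0)
    (fun u _ => (hasDerivAt_meanTanh u).continuousAt.continuousWithinAt)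
    (fun u _ => (hasDerivAt_meanTanh u).differentiableAt.differentiableWithinAt) fun u hu => ?_
  rw [interior_Ici, mem_Ioi] at hu
  rw [(hasDerivAt_meanTanh u).deriv, integral_deriv_meanTanh]
  refine mul_nonneg (by linarith) (integral_nonneg fun z => ?_)
  have h₁ : 0 ≤ 1 - tanh (u ^ 2 + u * z) ^ 2 := by linarith [tanh_sq_lt_one (u ^ 2 + u * z)]
  have h₂ : 0 ≤ 1 - tanh (u ^ 2 + u * z) := by linarith [tanh_lt_one (u ^ 2 + u * z)]
  exact mul_nonneg (mul_nonneg h₁ h₂) (gaussianPDFReal_nonneg 0 1 z)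

theorem antitoneOn_mmse : AntitoneOn mmse (Ici 0) := fun s hs t ht hst => by
  rw [mmse_eq_one_sub_meanTanh hs, mmse_eq_one_sub_meanTanh ht, sub_le_sub_iff_left]
  exact monotoneOn_meanTanh (sqrt_nonneg s) (sqrt_nonneg t) (sqrt_le_sqrt hst)

section DensityEvolution

variable {ι : Type*} [Fintype ι] (B : ι → ι → ℝ) (α : ι → ℝ)

noncomputable def densityEvolutionStep (σ2 : ℝ) (x : ι → ℝ) (m : ι) : ℝ :=
  ∑ l, B l m ^ 2 / (σ2 + α l * ∑ m', B l m' ^ 2 * mmse (x m'))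

variable {B α}

theorem interference_nonneg (hα : ∀ l, 0 ≤ α l) (x : ι → ℝ) (l : ι) :
    0 ≤ α l * ∑ m', B l m' ^ 2 * mmse (x m') :=
  mul_nonneg (hα l) (Finset.sum_nonneg fun _ _ => mul_nonneg (sq_nonneg _) (mmse_nonneg _))

theorem densityEvolutionStep_nonneg (hα : ∀ l, 0 ≤ α l) {σ2 : ℝ} (hσ2 : 0 ≤ σ2) (x : ι → ℝ) (m : ι) :
    0 ≤ densityEvolutionStep B α σ2 x m :=
  Finset.sum_nonneg fun l _ =>
    div_nonneg (sq_nonneg _) (add_nonneg hσ2 (interference_nonneg hα x l))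

theorem densityEvolutionStep_le_densityEvolutionStep (hα : ∀ l, 0 ≤ α l) {σ2 σ2' : ℝ} (hσ2 : 0 < σ2) (hσ2' : σ2 ≤ σ2')
    {x y : ι → ℝ} (hx : ∀ m, 0 ≤ x m) (hxy : ∀ m, x m ≤ y m) (m : ι) :
    densityEvolutionStep B α σ2' x m ≤ densityEvolutionStep B α σ2 y m := by
  refine Finset.sum_le_sum fun l _ => div_le_div_of_nonneg_left (sq_nonneg _) ?_ ?_
  · exact add_pos_of_pos_of_nonneg hσ2 (interference_nonneg hα y l)
  · gcongr with m'
    · exact hα l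
    · exact antitoneOn_mmse (hx m') ((hx m').trans (hxy m')) (hxy m')

end DensityEvolution

theorem de_antitone_in_noise_general (L : ℕ) (B : Fin L → Fin L → ℝ)
    (α : Fin L → ℝ) (hα : ∀ l, 0 ≤ α l)
    (σ2 σ2' : ℝ) (hσ2 : 0 < σ2) (hσ2' : σ2 ≤ σ2')
    (sir sir' : ℕ → Fin L → ℝ)
    (hsir0 : ∀ m, sir 0 m = 0) (hsir0' : ∀ m, sir' 0 m = 0)
    (hsir : ∀ i m, sir (i + 1) m =
      ∑ l : Fin L,
        (B l m) ^ 2 / (σ2 + α l * ∑ m' : Fin L, (B l m') ^ 2 * mmse (sir i m')))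
    (hsir' : ∀ i m, sir' (i + 1) m =
      ∑ l : Fin L,
        (B l m) ^ 2 / (σ2' + α l * ∑ m' : Fin L, (B l m') ^ 2 * mmse (sir' i m'))) :
    ∀ i : ℕ, ∀ m : Fin L, sir' i m ≤ sir i m := by
  suffices h : ∀ i, (∀ m, 0 ≤ sir' i m) ∧ ∀ m, sir' i m ≤ sir i m from fun i => (h i).2
  intro i
  induction i with
  | zero => simp [hsir0, hsir0']
  | succ i ih =>
    rw [show sir (i + 1) = densityEvolutionStep B α σ2 (sir i) from funext (hsir i),
      show sir' (i + 1) = densityEvolutionStep B α σ2' (sir' i) from funext (hsir' i)]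
    exact ⟨densityEvolutionStep_nonneg hα (hσ2.le.trans hσ2') _, densityEvolutionStep_le_densityEvolutionStep hα hσ2 hσ2' ih.1 ih.2⟩

/-- **Monotonicity of density evolution in the noise variance.**
If `0 < σ² ≤ σ'²` and `sir`, `sir'` are the DE sequences with noise variances `σ²` and
`σ'²` respectively (same base matrix with unit column square-sums and same loads
`α_l ≥ 0`), then `sir_m(i) ≥ sir'_m(i)` for all `i` and `m`. -/
theorem de_antitone_in_noise (L : ℕ) (hL : 1 ≤ L) (B : Fin L → Fin L → ℝ)
    (hB : ∀ m : Fin L, ∑ l : Fin L, (B l m) ^ 2 = 1)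
    (α : Fin L → ℝ) (hα : ∀ l, 0 ≤ α l)
    (σ2 σ2' : ℝ) (hσ2 : 0 < σ2) (hσ2' : σ2 ≤ σ2')
    (sir sir' : ℕ → Fin L → ℝ)
    (hsir0 : ∀ m, sir 0 m = 0) (hsir0' : ∀ m, sir' 0 m = 0)
    (hsir : ∀ i m, sir (i + 1) m =
      ∑ l : Fin L,
        (B l m) ^ 2 / (σ2 + α l * ∑ m' : Fin L, (B l m') ^ 2 * mmse (sir i m')))
    (hsir' : ∀ i m, sir' (i + 1) m =
      ∑ l : Fin L,
        (B l m) ^ 2 / (σ2' + α l * ∑ m' : Fin L, (B l m') ^ 2 * mmse (sir' i m'))) :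
    ∀ i : ℕ, ∀ m : Fin L, sir' i m ≤ sir i m :=
  de_antitone_in_noise_general L B α hα σ2 σ2' hσ2 hσ2' sir sir' hsir0 hsir0' hsir hsir'
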